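/- Let 𝔟 and 𝔟' be finite sets of n-tuples of finite multisets of points such that: (i) any two elements of 𝔟 are isomorphic (related by a partial injection of atoms acting componentwise), and likewise for 𝔟'; (ii) within 𝔟, distinct elements have disjoint atom sets, and likewise within 𝔟'; (iii) some element of 𝔟 is isomorphic to some element of 𝔟'; (iv) |𝔟| = |𝔟'|. Then there is a single partial injection ρ of atoms and a bijection φ : 𝔟 → 𝔟' such that ρ · r = φ(r) for every r ∈ 𝔟. -/

import Mathlib

/-!
Fix any bijection `φ : 𝔟 → 𝔟'`. Going through the isomorphic pair given by (iii), every
`r ∈ 𝔟` is isomorphic to `φ r`, say via a partial injection `ρ_r` defined on the atoms of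
`r`. The atom sets of the elements of `𝔟` are pairwise disjoint, and so are their images under
the `ρ_r`, which are the atom sets of the elements of `𝔟'`; hence the `ρ_r` glue to one
partial injection on the union of the atom sets.
-/

inductive Pt (A : Type) : Type where
  | atom : A → Pt A
  | star : Bool → Pt A
  | pair : Bool → Pt A → Pt A → Pt A
  | bag  : Bool → List (Pt A) → Pt A

namespace Pt

variable {A : Type}

/-- The homomorphic extension to points of a map on atoms. -/
def rename (t : A → A) : Pt A → Pt A
  | .atom γ => .atom (t γ)
  | .star ι => .star ι
  | .pair ι a b => .pair ι (rename t a) (rename t b)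
  | .bag ι l => .bag ι (l.attach.map (fun x => rename t x.1))
decreasing_by
  all_goals first
    | (simp; omega)
    | (have := List.sizeOf_lt_of_mem x.2; simp; omega)
    | simp

/-- The set of atoms occurring in a point. -/
def At : Pt A → Set A
  | .atom γ => {γ}
  | .star _ => ∅
  | .pair _ a b => At a ∪ At b
  | .bag _ l => ⋃ x ∈ l.attach, At x.1
decreasing_by
  all_goals first
    | (simp; omega)
    | (have := List.sizeOf_lt_of_mem x.2; simp; omega)
    | simp

/-- The set of atoms occurring in a finite multiset of points. -/
def AtM (b : Multiset (Pt A)) : Set A :=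
  ⋃ α ∈ b, At α

/-- The set of atoms occurring in an `n`-tuple of multisets of points. -/
def AtT {n : ℕ} (r : Fin n → Multiset (Pt A)) : Set A :=
  ⋃ i, AtM (r i)

/-- Two tuples of multisets of points are isomorphic when they are related by
a partial injection of atoms acting componentwise. -/
def Iso {n : ℕ} (r r' : Fin n → Multiset (Pt A)) : Prop :=
  ∃ (f : A → A) (dom : Set A), Set.InjOn f dom ∧ AtT r ⊆ dom ∧
    ∀ i, (r i).map (rename f) = r' i

open Function in
theorem _root_.Set.exists_injOn_iUnion_of_pairwise_disjoint {α ι : Type*} {S : ι → Set α}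
    {f : ι → α → α} (hS : Pairwise (Disjoint on S)) (hf : ∀ i, Set.InjOn (f i) (S i))
    (himg : Pairwise (Disjoint on fun i => f i '' S i)) :
    ∃ F : α → α, (∀ i, Set.EqOn F (f i) (S i)) ∧ Set.InjOn F (⋃ i, S i) := by
  classical
  set F : α → α := fun a => if h : ∃ i, a ∈ S i then f h.choose a else a
  have hF : ∀ i, Set.EqOn F (f i) (S i) := by
    intro i a ha
    have h : ∃ i, a ∈ S i := ⟨i, ha⟩
    obtain rfl : h.choose = i := hS.eq (Set.not_disjoint_iff.2 ⟨a, h.choose_spec, ha⟩)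
    exact dif_pos h
  refine ⟨F, hF, ?_⟩
  intro a ha b hb hab
  obtain ⟨i, ha⟩ := Set.mem_iUnion.1 ha
  obtain ⟨j, hb⟩ := Set.mem_iUnion.1 hb
  rw [hF i ha, hF j hb] at hab
  obtain rfl : i = j := himg.eq <| Set.not_disjoint_iff.2
    ⟨_, Set.mem_image_of_mem _ ha, hab ▸ Set.mem_image_of_mem _ hb⟩
  exact hf i ha hb hab

@[simp] lemma At_atom (γ : A) : At (.atom γ : Pt A) = {γ} := by rw [At.eq_def]

@[simp] lemma At_star (ι : Bool) : At (.star ι : Pt A) = ∅ := by rw [At.eq_def]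

@[simp] lemma At_pair (ι : Bool) (a b : Pt A) : At (.pair ι a b) = At a ∪ At b := by
  rw [At.eq_def]

@[simp] lemma At_bag (ι : Bool) (l : List (Pt A)) : At (.bag ι l : Pt A) = ⋃ x ∈ l, At x := by
  rw [At]; ext a; simp

@[simp] lemma rename_bag (f : A → A) (ι : Bool) (l : List (Pt A)) :
    rename f (.bag ι l) = .bag ι (l.map (rename f)) := by
  rw [rename]; simp

lemma rename_congr {f g : A → A} (p : Pt A) (h : Set.EqOn f g (At p)) :
    rename f p = rename g p := by
  induction p using At.induct with
  | case1 γ => simp only [rename]; rw [h (by simp)]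
  | case2 ι => simp only [rename]
  | case3 ι a b iha ihb =>
    simp only [At_pair, Set.eqOn_union] at h
    simp only [rename]; rw [iha h.1, ihb h.2]
  | case4 ι l ih =>
    rw [At_bag] at h
    simp only [rename_bag]
    congr 1
    exact List.map_congr_left fun x hx => ih ⟨x, hx⟩ (h.mono (Set.subset_biUnion_of_mem hx))

lemma rename_rename (f g : A → A) (p : Pt A) : rename g (rename f p) = rename (g ∘ f) p := by
  induction p using At.induct with
  | case1 γ => simp only [rename]; rfl
  | case2 ι => simp only [rename]
  | case3 ι a b iha ihb => simp only [rename]; rw [iha, ihb]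
  | case4 ι l ih =>
    simp only [rename_bag, List.map_map]
    congr 1
    exact List.map_congr_left fun x hx => ih ⟨x, hx⟩

lemma At_rename (f : A → A) (p : Pt A) : At (rename f p) = f '' At p := by
  induction p using At.induct with
  | case1 γ => simp [rename]
  | case2 ι => simp [rename]
  | case3 ι a b iha ihb => simp only [rename, At_pair, iha, ihb, Set.image_union]
  | case4 ι l ih =>
    simp only [rename_bag, At_bag, Set.image_iUnion₂, List.mem_map, Set.iUnion_exists,
      Set.biUnion_and', Set.iUnion_iUnion_eq_right]
    exact Set.iUnion₂_congr fun x hx => ih ⟨x, hx⟩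

lemma At_subset_AtT {n : ℕ} {r : Fin n → Multiset (Pt A)} {i : Fin n} {p : Pt A}
    (hp : p ∈ r i) : At p ⊆ AtT r :=
  (Set.subset_biUnion_of_mem (u := At) hp).trans (Set.subset_iUnion (fun i => AtM (r i)) i)

lemma AtT_map_rename (f : A → A) {n : ℕ} (r : Fin n → Multiset (Pt A)) :
    AtT (fun i => (r i).map (rename f)) = f '' AtT r := by
  simp only [AtT, AtM, Set.image_iUnion, Multiset.mem_map, Set.iUnion_exists, Set.biUnion_and',
    Set.iUnion_iUnion_eq_right, At_rename]

lemma map_rename_congr {f g : A → A} {n : ℕ} {r : Fin n → Multiset (Pt A)}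
    (h : Set.EqOn f g (AtT r)) :
    (fun i => (r i).map (rename f)) = fun i => (r i).map (rename g) :=
  funext fun _ => Multiset.map_congr rfl fun p hp => rename_congr p (h.mono (At_subset_AtT hp))

lemma Iso.trans {n : ℕ} {r s t : Fin n → Multiset (Pt A)} (hrs : Iso r s) (hst : Iso s t) :
    Iso r t := by
  obtain ⟨f, d, hf, hrd, hfs⟩ := hrs
  obtain ⟨g, e, hg, hse, hgt⟩ := hst
  obtain rfl : (fun i => (r i).map (rename f)) = s := funext hfs
  rw [AtT_map_rename] at hse
  refine ⟨g ∘ f, AtT r, hg.comp (hf.mono hrd) (Set.image_subset_iff.1 hse), subset_rfl, ?_⟩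
  intro i
  rw [← hgt, Multiset.map_map]
  exact Multiset.map_congr rfl fun p _ => (rename_rename f g p).symm

/-- If all elements of `𝔟` are pairwise isomorphic with pairwise disjoint
atom sets (and likewise for `𝔟'`), some element of `𝔟` is isomorphic to some
element of `𝔟'`, and `|𝔟| = |𝔟'|`, then a single partial injection `f`
together with a bijection `φ : 𝔟 → 𝔟'` realizes all the isomorphisms. -/
theorem stmt16 (n : ℕ) (𝔟 𝔟' : Set (Fin n → Multiset (Pt A)))
    (hfin : 𝔟.Finite) (hfin' : 𝔟'.Finite)
    (h1 : ∀ r ∈ 𝔟, ∀ r' ∈ 𝔟, Iso r r')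
    (h1' : ∀ r ∈ 𝔟', ∀ r' ∈ 𝔟', Iso r r')
    (h2 : ∀ r ∈ 𝔟, ∀ r' ∈ 𝔟, r ≠ r' → AtT r ∩ AtT r' = ∅)
    (h2' : ∀ r ∈ 𝔟', ∀ r' ∈ 𝔟', r ≠ r' → AtT r ∩ AtT r' = ∅)
    (h3 : ∃ r ∈ 𝔟, ∃ r' ∈ 𝔟', Iso r r')
    (h4 : 𝔟.ncard = 𝔟'.ncard) :
    ∃ (f : A → A) (dom : Set A)
      (φ : (Fin n → Multiset (Pt A)) → (Fin n → Multiset (Pt A))),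
      Set.InjOn f dom ∧ Set.BijOn φ 𝔟 𝔟' ∧
      ∀ r ∈ 𝔟, AtT r ⊆ dom ∧ (fun i => (r i).map (rename f)) = φ r := by
  obtain ⟨φ, hφ⟩ := hfin.exists_bijOn_of_encard_eq (t := 𝔟')
    (by rw [← hfin.cast_ncard_eq, ← hfin'.cast_ncard_eq, h4])
  obtain ⟨r₀, hr₀, r₀', hr₀', h₀⟩ := h3
  have hiso (r : 𝔟) : Iso r.1 (φ r) :=
    ((h1 r r.2 r₀ hr₀).trans h₀).trans (h1' _ hr₀' _ (hφ.mapsTo r.2))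
  choose f dom hinj hsub hmap using hiso
  have hAt (r : 𝔟) : AtT (φ r) = f r '' AtT r.1 := by rw [← funext (hmap r), AtT_map_rename]
  obtain ⟨F, hF, hFinj⟩ :=
    Set.exists_injOn_iUnion_of_pairwise_disjoint (S := fun r : 𝔟 => AtT r.1)
    (fun r s hrs => Set.disjoint_iff_inter_eq_empty.2 <|
      h2 r r.2 s s.2 (Subtype.coe_injective.ne hrs))
    (fun r => (hinj r).mono (hsub r))
    (fun r s hrs => by
      simpa only [Function.onFun, ← hAt, Set.disjoint_iff_inter_eq_empty] using
        h2' _ (hφ.mapsTo r.2) _ (hφ.mapsTo s.2)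
          (hφ.injOn.ne r.2 s.2 (Subtype.coe_injective.ne hrs)))
  refine ⟨F, ⋃ r : 𝔟, AtT r.1, φ, hFinj, hφ, fun r hr =>
    ⟨Set.subset_iUnion (fun r : 𝔟 => AtT r.1) ⟨r, hr⟩, ?_⟩⟩
  rw [map_rename_congr (hF ⟨r, hr⟩)]
  exact funext (hmap ⟨r, hr⟩)

end Pt
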